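/- Theorem 2 (convergence of HCISTA, precise stationarity form). Let (xⁿ, vⁿ, uⁿ, wⁿ) be an HCISTA trajectory and assume there is a constant η_c > 0 such that ‖uⁿ − xⁿ‖₂ ≤ η_c·‖vⁿ − xⁿ‖₂ for every n with vⁿ ≠ xⁿ (Assumption 1). Then every accumulation point x̄ of the sequence (xⁿ) (i.e., every limit of a convergent subsequence) satisfies Aᵀ(A x̄ − b) = 0; equivalently, x̄ is a global minimizer of x ↦ (1/2)‖Ax − b‖₂² on ℝ^N. -/

import Mathlib

/-- The Euclidean (ℓ²) norm on `Fin n → ℝ`. -/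
noncomputable def l2norm {n : ℕ} (x : Fin n → ℝ) : ℝ := Real.sqrt (∑ i, (x i) ^ 2)

/-- The ℓ¹ norm on `Fin n → ℝ`. -/
noncomputable def l1norm {n : ℕ} (x : Fin n → ℝ) : ℝ := ∑ i, |x i|

/-- The operator norm ‖A‖₂ of a matrix with respect to Euclidean norms. -/
noncomputable def opNorm {m n : ℕ} (A : Matrix (Fin m) (Fin n) ℝ) : ℝ :=
  sSup {c : ℝ | ∃ x : Fin n → ℝ, l2norm x ≤ 1 ∧ c = l2norm (A.mulVec x)}

/-- Componentwise soft-thresholding: `S_θ(z)ᵢ = sgn(zᵢ) * max (|zᵢ| - θ) 0`. -/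
noncomputable def soft {n : ℕ} (θ : ℝ) (z : Fin n → ℝ) : Fin n → ℝ :=
  fun i => Real.sign (z i) * max (|z i| - θ) 0

/-- Gradient of `f(x) = (1/2)‖Ax - b‖₂²`, namely `Aᵀ(Ax - b)`. -/
def gradf {m n : ℕ} (A : Matrix (Fin m) (Fin n) ℝ) (b : Fin m → ℝ) (x : Fin n → ℝ) :
    Fin n → ℝ :=
  A.transpose.mulVec (A.mulVec x - b)

/-- The Lasso objective `F_λ(x) = (1/2)‖Ax - b‖₂² + λ‖x‖₁`. -/
noncomputable def Flasso {m n : ℕ} (A : Matrix (Fin m) (Fin n) ℝ) (b : Fin m → ℝ)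
    (lam : ℝ) (x : Fin n → ℝ) : ℝ :=
  (1 / 2) * (l2norm (A.mulVec x - b)) ^ 2 + lam * l1norm x

/-- `s` is a subgradient of the convex function `φ` at the point `z`:
`φ(y) ≥ φ(z) + ⟨s, y - z⟩` for all `y`. -/
def IsSubgradient {n : ℕ} (φ : (Fin n → ℝ) → ℝ) (s z : Fin n → ℝ) : Prop :=
  ∀ y : Fin n → ℝ, φ z + ∑ i, s i * (y i - z i) ≤ φ y

/-!
Each HCISTA step lowers the Lasso value `F_λ(x) = ½‖Ax - b‖² + λ‖x‖₁` by at least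
`‖A‖²/22 · ‖vⁿ - xⁿ‖²`. Both `vⁿ` and `wⁿ` are proximal gradient steps and satisfy the
three-point inequality; `F_λ` is convex on the segment `[vⁿ, wⁿ]`; and the lower bound on `αⁿ`
makes the decrease at `vⁿ` pay for the possible increase at `wⁿ`. Since `λⁿ` is nonincreasing,
`F_{λⁿ}(xⁿ) ≥ 0` is nonincreasing, so `vⁿ - xⁿ → 0`. By Assumption 1 the steps `xⁿ⁺¹ - xⁿ`
vanish too, hence so does `λⁿ⁺¹ ≤ C_λ‖xⁿ⁺¹ - xⁿ‖`. Because `vⁿ` is a soft-thresholded gradient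
step from `xⁿ`, `‖∇f(xⁿ)‖_∞ ≤ ‖vⁿ - xⁿ‖/tⁿ + λⁿ → 0`, and continuity of `∇f` gives `∇f(x̄) = 0`.
-/

open WithLp Matrix Filter Topology

section L2

variable {n : ℕ}

theorem l2norm_eq_norm_toLp (x : Fin n → ℝ) :
    l2norm x = ‖(toLp 2 x : EuclideanSpace ℝ (Fin n))‖ := by
  simp [l2norm, EuclideanSpace.norm_eq]

theorem l2norm_sq (x : Fin n → ℝ) : l2norm x ^ 2 = x ⬝ᵥ x := by
  rw [l2norm, Real.sq_sqrt (Finset.sum_nonneg fun i _ => sq_nonneg (x i))]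
  simp [dotProduct, sq]

theorem l2norm_nonneg (x : Fin n → ℝ) : 0 ≤ l2norm x := Real.sqrt_nonneg _

theorem l2norm_zero : l2norm (0 : Fin n → ℝ) = 0 := by simp [l2norm]

theorem l2norm_sub_pos {x y : Fin n → ℝ} (h : x ≠ y) : 0 < l2norm (x - y) := by
  rw [l2norm_eq_norm_toLp, norm_pos_iff, Ne, toLp_eq_zero, sub_eq_zero]
  exact h

theorem l2norm_add_le (x y : Fin n → ℝ) : l2norm (x + y) ≤ l2norm x + l2norm y := by
  simpa only [l2norm_eq_norm_toLp, toLp_add] using norm_add_le _ _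

theorem l2norm_sub_comm (x y : Fin n → ℝ) : l2norm (x - y) = l2norm (y - x) := by
  simpa only [l2norm_eq_norm_toLp, toLp_sub] using norm_sub_rev _ _

theorem l2norm_smul (c : ℝ) (x : Fin n → ℝ) : l2norm (c • x) = |c| * l2norm x := by
  simp only [l2norm_eq_norm_toLp, toLp_smul, norm_smul, Real.norm_eq_abs]

theorem norm_le_l2norm (x : Fin n → ℝ) : ‖x‖ ≤ l2norm x := by
  rw [l2norm_eq_norm_toLp]
  exact (pi_norm_le_iff_of_nonneg (norm_nonneg _)).2 fun i =>
    PiLp.norm_apply_le (toLp 2 x) i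

end L2

section OpNorm

open scoped Matrix.Norms.L2Operator

variable {m n : ℕ} (A : Matrix (Fin m) (Fin n) ℝ)

theorem opNorm_eq_l2_opNorm : opNorm A = ‖A‖ := by
  rw [l2_opNorm_def, ← ContinuousLinearMap.sSup_unitClosedBall_eq_norm, opNorm]
  congr 1
  ext c
  simp only [Set.mem_ofPred_eq, Set.mem_image, Metric.mem_closedBall, dist_zero_right,
    l2norm_eq_norm_toLp]
  constructor
  · rintro ⟨x, hx, rfl⟩
    exact ⟨toLp 2 x, hx, rfl⟩
  · rintro ⟨y, hy, rfl⟩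
    exact ⟨ofLp y, hy, rfl⟩

theorem l2norm_mulVec_le (x : Fin n → ℝ) : l2norm (A *ᵥ x) ≤ opNorm A * l2norm x := by
  rw [opNorm_eq_l2_opNorm, l2norm_eq_norm_toLp, l2norm_eq_norm_toLp]
  exact A.l2_opNorm_mulVec (toLp 2 x)

theorem l2norm_transpose_mulVec_le (y : Fin m → ℝ) : l2norm (Aᵀ *ᵥ y) ≤ opNorm A * l2norm y := by
  rw [opNorm_eq_l2_opNorm, l2norm_eq_norm_toLp, l2norm_eq_norm_toLp, ← l2_opNorm_conjTranspose,
    conjTranspose_eq_transpose_of_trivial]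
  exact Aᵀ.l2_opNorm_mulVec (toLp 2 y)

theorem opNorm_pos (hA : A ≠ 0) : 0 < opNorm A := by
  rw [opNorm_eq_l2_opNorm]
  exact norm_pos_iff.2 hA

end OpNorm

section SoftThreshold

noncomputable def softThreshold (θ a : ℝ) : ℝ := Real.sign a * max (|a| - θ) 0

theorem softThreshold_eq (θ a : ℝ) (hθ : 0 ≤ θ) :
    softThreshold θ a = a - max (-θ) (min θ a) := by
  rcases lt_trichotomy a 0 with h | rfl | h
  · rw [softThreshold, Real.sign_of_neg h, abs_of_neg h]
    simp only [max_def, min_def]; split_ifs <;> linarith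
  · simp [softThreshold, hθ]
  · rw [softThreshold, Real.sign_of_pos h, abs_of_pos h]
    simp only [max_def, min_def]; split_ifs <;> linarith

variable {θ : ℝ}

theorem abs_sub_softThreshold_le (hθ : 0 ≤ θ) (a : ℝ) : |a - softThreshold θ a| ≤ θ := by
  rw [softThreshold_eq θ a hθ, sub_sub_cancel, abs_le]
  constructor
  · exact le_max_left _ _
  · exact max_le (by linarith) (min_le_left _ _)

theorem sub_softThreshold_mul_self (hθ : 0 ≤ θ) (a : ℝ) :
    (a - softThreshold θ a) * softThreshold θ a = θ * |softThreshold θ a| := by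
  rw [softThreshold_eq θ a hθ, sub_sub_cancel]
  rcases le_total a (-θ) with h | h
  · rw [min_eq_right (by linarith), max_eq_left h, abs_of_nonpos (by linarith)]; ring
  rcases le_total a θ with h' | h'
  · rw [min_eq_right h', max_eq_right h]; simp
  · rw [min_eq_left h', max_eq_right (by linarith), abs_of_nonneg (by linarith)]

theorem abs_softThreshold_sub_le (hθ : 0 ≤ θ) (a c : ℝ) :
    |softThreshold θ a - softThreshold θ c| ≤ |a - c| := by
  rw [softThreshold_eq θ a hθ, softThreshold_eq θ c hθ]
  rcases le_total c a with h | h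
  · rw [abs_of_nonneg (sub_nonneg.2 h), abs_le]
    constructor <;> simp only [max_def, min_def] <;> split_ifs <;> linarith
  · rw [abs_of_nonpos (sub_nonpos.2 h), abs_le]
    constructor <;> simp only [max_def, min_def] <;> split_ifs <;> linarith

end SoftThreshold

section Soft

variable {n : ℕ} {θ : ℝ}

theorem soft_apply (z : Fin n → ℝ) (i : Fin n) : soft θ z i = softThreshold θ (z i) := rfl

theorem norm_sub_soft_le (hθ : 0 ≤ θ) (z : Fin n → ℝ) : ‖z - soft θ z‖ ≤ θ :=
  (pi_norm_le_iff_of_nonneg hθ).2 fun i => abs_sub_softThreshold_le hθ (z i)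

theorem isSubgradient_soft (hθ : 0 ≤ θ) (z : Fin n → ℝ) :
    IsSubgradient (fun y => θ * l1norm y) (z - soft θ z) (soft θ z) := by
  intro y
  simp only [l1norm, Finset.mul_sum, ← Finset.sum_add_distrib]
  refine Finset.sum_le_sum fun i _ => ?_
  simp only [Pi.sub_apply, soft_apply]
  have hmul := sub_softThreshold_mul_self hθ (z i)
  calc θ * |softThreshold θ (z i)| + (z i - softThreshold θ (z i)) * (y i - softThreshold θ (z i))
      = (z i - softThreshold θ (z i)) * y i := by rw [← hmul]; ring
    _ ≤ |z i - softThreshold θ (z i)| * |y i| := (le_abs_self _).trans (abs_mul _ _).le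
    _ ≤ θ * |y i| := mul_le_mul_of_nonneg_right (abs_sub_softThreshold_le hθ _) (abs_nonneg _)

theorem l2norm_soft_sub_soft_le (hθ : 0 ≤ θ) (a c : Fin n → ℝ) :
    l2norm (soft θ a - soft θ c) ≤ l2norm (a - c) :=
  Real.sqrt_le_sqrt <| Finset.sum_le_sum fun i _ =>
    sq_le_sq.2 (abs_softThreshold_sub_le hθ (a i) (c i))

end Soft

section LeastSquares

variable {m n : ℕ} (A : Matrix (Fin m) (Fin n) ℝ) (b : Fin m → ℝ)

theorem l2norm_add_sq (x y : Fin n → ℝ) :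
    l2norm (x + y) ^ 2 = l2norm x ^ 2 + 2 * (x ⬝ᵥ y) + l2norm y ^ 2 := by
  simp only [l2norm_sq, add_dotProduct, dotProduct_add, dotProduct_comm y x]
  ring

theorem l2norm_sub_sq (x y : Fin n → ℝ) :
    l2norm (x - y) ^ 2 = l2norm x ^ 2 - 2 * (x ⬝ᵥ y) + l2norm y ^ 2 := by
  simp only [l2norm_sq, sub_dotProduct, dotProduct_sub, dotProduct_comm y x]
  ring

theorem l2norm_sq_mulVec_sub (x y : Fin n → ℝ) :
    l2norm (A *ᵥ y - b) ^ 2 =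
      l2norm (A *ᵥ x - b) ^ 2 + 2 * (gradf A b x ⬝ᵥ (y - x)) + l2norm (A *ᵥ (y - x)) ^ 2 := by
  have hsplit : A *ᵥ y - b = (A *ᵥ x - b) + A *ᵥ (y - x) := by rw [mulVec_sub]; abel
  rw [hsplit, l2norm_add_sq, gradf, dotProduct_mulVec, mulVec_transpose]

theorem l2norm_sq_le_of_gradf_eq_zero {x : Fin n → ℝ} (hx : gradf A b x = 0) (y : Fin n → ℝ) :
    l2norm (A *ᵥ x - b) ^ 2 ≤ l2norm (A *ᵥ y - b) ^ 2 := by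
  rw [l2norm_sq_mulVec_sub A b x y, hx, zero_dotProduct]
  nlinarith [sq_nonneg (l2norm (A *ᵥ (y - x)))]

theorem continuous_gradf : Continuous (gradf A b) :=
  continuous_const.matrix_mulVec
    ((continuous_const.matrix_mulVec continuous_id).sub continuous_const)

theorem l2norm_gradStep_sub_le {t : ℝ} (ht : 0 ≤ t) (htA : t * opNorm A ^ 2 ≤ 2)
    (x y : Fin n → ℝ) :
    l2norm ((x - t • gradf A b x) - (y - t • gradf A b y)) ≤ l2norm (x - y) := by
  have hdiff : (x - t • gradf A b x) - (y - t • gradf A b y) =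
      (x - y) + (-t) • (Aᵀ *ᵥ (A *ᵥ (x - y))) := by
    simp only [gradf, mulVec_sub, smul_sub, neg_smul]; abel
  have hAd : (x - y) ⬝ᵥ (Aᵀ *ᵥ (A *ᵥ (x - y))) = l2norm (A *ᵥ (x - y)) ^ 2 := by
    rw [l2norm_sq, dotProduct_mulVec, vecMul_transpose, dotProduct_comm]
  have hAAd : l2norm (Aᵀ *ᵥ (A *ᵥ (x - y))) ^ 2 ≤ opNorm A ^ 2 * l2norm (A *ᵥ (x - y)) ^ 2 := by
    rw [← mul_pow]
    exact pow_le_pow_left₀ (l2norm_nonneg _) (l2norm_transpose_mulVec_le A _) 2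
  rw [← sq_le_sq₀ (l2norm_nonneg _) (l2norm_nonneg _), hdiff, l2norm_add_sq, dotProduct_smul, hAd,
    l2norm_smul, smul_eq_mul, abs_neg, abs_of_nonneg ht, mul_pow]
  nlinarith [mul_le_mul_of_nonneg_left hAAd (sq_nonneg t),
    mul_le_mul_of_nonneg_right htA (mul_nonneg ht (sq_nonneg (l2norm (A *ᵥ (x - y)))))]

end LeastSquares

section Lasso

variable {m n : ℕ} (A : Matrix (Fin m) (Fin n) ℝ) (b : Fin m → ℝ)

theorem l1norm_nonneg (x : Fin n → ℝ) : 0 ≤ l1norm x :=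
  Finset.sum_nonneg fun i _ => abs_nonneg (x i)

theorem Flasso_nonneg {lam : ℝ} (hlam : 0 ≤ lam) (x : Fin n → ℝ) : 0 ≤ Flasso A b lam x := by
  unfold Flasso
  have := l1norm_nonneg x
  positivity

theorem Flasso_le_Flasso_of_le {lam lam' : ℝ} (hlam : lam ≤ lam') (x : Fin n → ℝ) :
    Flasso A b lam x ≤ Flasso A b lam' x := by
  unfold Flasso
  nlinarith [l1norm_nonneg x]

theorem Flasso_convex_combination_le {lam α : ℝ} (hlam : 0 ≤ lam) (hα0 : 0 ≤ α) (hα1 : α ≤ 1)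
    (v w : Fin n → ℝ) :
    Flasso A b lam (α • v + (1 - α) • w) ≤ α * Flasso A b lam v + (1 - α) * Flasso A b lam w := by
  have hβ : 0 ≤ 1 - α := sub_nonneg.2 hα1
  have hres : A *ᵥ (α • v + (1 - α) • w) - b = α • (A *ᵥ v - b) + (1 - α) • (A *ᵥ w - b) := by
    simp only [mulVec_add, mulVec_smul, smul_sub]; module
  have hnorm : l2norm (A *ᵥ (α • v + (1 - α) • w) - b) ≤
      α * l2norm (A *ᵥ v - b) + (1 - α) * l2norm (A *ᵥ w - b) := by
    rw [hres]
    refine (l2norm_add_le _ _).trans_eq ?_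
    rw [l2norm_smul, l2norm_smul, abs_of_nonneg hα0, abs_of_nonneg hβ]
  have hl1 : l1norm (α • v + (1 - α) • w) ≤ α * l1norm v + (1 - α) * l1norm w := by
    simp only [l1norm, Finset.mul_sum, ← Finset.sum_add_distrib]
    refine Finset.sum_le_sum fun i _ => (abs_add_le _ _).trans_eq ?_
    simp only [Pi.smul_apply, smul_eq_mul, abs_mul, abs_of_nonneg hα0, abs_of_nonneg hβ]
  have hsq := pow_le_pow_left₀ (l2norm_nonneg _) hnorm 2
  unfold Flasso
  nlinarith [mul_nonneg hα0 hβ, sq_nonneg (l2norm (A *ᵥ v - b) - l2norm (A *ᵥ w - b)),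
    mul_le_mul_of_nonneg_left hl1 hlam]

theorem Flasso_soft_gradStep_le {lam t : ℝ} (hlam : 0 ≤ lam) (ht : 0 ≤ t) {z p : Fin n → ℝ}
    (hp : p = soft (lam * t) (z - t • gradf A b z)) (y : Fin n → ℝ) :
    t * Flasso A b lam p + l2norm (p - y) ^ 2 / 2 +
        (1 - t * opNorm A ^ 2) * l2norm (p - z) ^ 2 / 2 ≤
      t * Flasso A b lam y + l2norm (z - y) ^ 2 / 2 := by
  have hprox := isSubgradient_soft (mul_nonneg hlam ht) (z - t • gradf A b z) y
  rw [← hp] at hprox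
  change lam * t * l1norm p + (z - t • gradf A b z - p) ⬝ᵥ (y - p) ≤ lam * t * l1norm y at hprox
  rw [show z - t • gradf A b z - p = (z - p) - t • gradf A b z by abel, sub_dotProduct,
    smul_dotProduct, smul_eq_mul, dotProduct_sub (gradf A b z)] at hprox
  have hpz := l2norm_sq_mulVec_sub A b z p
  have hyz := l2norm_sq_mulVec_sub A b z y
  simp only [dotProduct_sub] at hpz hyz
  have hA : l2norm (A *ᵥ (p - z)) ^ 2 ≤ opNorm A ^ 2 * l2norm (p - z) ^ 2 := by
    rw [← mul_pow]
    exact pow_le_pow_left₀ (l2norm_nonneg _) (l2norm_mulVec_le A _) 2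
  have hNy : 0 ≤ t * l2norm (A *ᵥ (y - z)) ^ 2 := by positivity
  have hpolar := l2norm_sub_sq (z - p) (y - p)
  rw [sub_sub_sub_cancel_right, l2norm_sub_comm z p, l2norm_sub_comm y p] at hpolar
  unfold Flasso
  linear_combination hprox + (t / 2) * hA + hNy / 2 + (t / 2) * hpz - (t / 2) * hyz - hpolar / 2

end Lasso

section Step

/-- With `r = ‖v - x‖`, `s = ‖u - x‖`, `d = ‖w - x‖`: either `u` is close to `x`, and then `w`
(within `s` of `v`) is far from `x`, or `s` is comparable to `r` and the bound on `α` keeps `α`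
away from `0`. -/
theorem hcista_weight_bound {r s d q α : ℝ} (hr : 0 ≤ r) (hs : 0 ≤ s) (hd : r - s ≤ d)
    (hq : q ≤ 1 / 2) (hα : s ^ 2 ≤ α * (s ^ 2 + q * r ^ 2)) (hα0 : 0 ≤ α) (hα1 : α ≤ 1) :
    r ^ 2 / 22 ≤ α * r ^ 2 / 4 + (1 - α) * d ^ 2 / 2 := by
  rcases lt_or_ge (3 * s) r with hsr | hsr
  · have hd2 : 4 * r ^ 2 ≤ 9 * d ^ 2 := by nlinarith
    nlinarith [mul_nonneg (sub_nonneg.2 hα1) (sq_nonneg r)]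
  · have hs2 : r ^ 2 ≤ 9 * s ^ 2 := by nlinarith
    nlinarith [mul_nonneg (sub_nonneg.2 hα1) (sq_nonneg d), mul_nonneg hα0 (sq_nonneg r),
      mul_nonneg (sub_nonneg.2 hα1) (sq_nonneg s),
      mul_le_mul_of_nonneg_left hq (mul_nonneg hα0 (sq_nonneg r))]

variable {m n : ℕ} (A : Matrix (Fin m) (Fin n) ℝ) (b : Fin m → ℝ)

theorem l2norm_soft_gradStep_sub_le {lam t : ℝ} {x u v w : Fin n → ℝ} (hlam : 0 ≤ lam) (ht : 0 ≤ t)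
    (htA : t * opNorm A ^ 2 ≤ 1) (hv : v = soft (lam * t) (x - t • gradf A b x))
    (hw : w = soft (lam * t) (u - t • gradf A b u)) :
    l2norm (w - v) ≤ l2norm (u - x) := by
  rw [hw, hv]
  exact (l2norm_soft_sub_soft_le (mul_nonneg hlam ht) _ _).trans
    (l2norm_gradStep_sub_le A b ht (by linarith) u x)

theorem Flasso_hcista_step_le {lam t δ α : ℝ} {x u v w : Fin n → ℝ} (hlam : 0 ≤ lam) (ht : 0 < t)
    (htA : t * opNorm A ^ 2 ≤ 1) (hδt : 1 ≤ 4 * δ * (t * opNorm A ^ 2))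
    (hq : 0 < 1 - 2 * t * δ * opNorm A ^ 2)
    (hv : v = soft (lam * t) (x - t • gradf A b x)) (hw : w = soft (lam * t) (u - t • gradf A b u))
    (hvx : v ≠ x)
    (hα : l2norm (u - x) ^ 2 /
      (l2norm (u - x) ^ 2 + (1 - 2 * t * δ * opNorm A ^ 2) * l2norm (v - x) ^ 2) ≤ α)
    (hα1 : α < 1) :
    Flasso A b lam (α • v + (1 - α) • w) + opNorm A ^ 2 / 22 * l2norm (v - x) ^ 2 ≤
      Flasso A b lam x := by
  have hr := l2norm_sub_pos hvx
  have hden : 0 < l2norm (u - x) ^ 2 + (1 - 2 * t * δ * opNorm A ^ 2) * l2norm (v - x) ^ 2 := by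
    positivity
  have hα0 : 0 ≤ α := (div_nonneg (sq_nonneg _) hden.le).trans hα
  rw [div_le_iff₀ hden] at hα
  have hwv := l2norm_soft_gradStep_sub_le A b hlam ht.le htA hv hw
  have hd : l2norm (v - x) - l2norm (u - x) ≤ l2norm (w - x) := by
    have := l2norm_add_le (v - w) (w - x)
    rw [sub_add_sub_cancel, l2norm_sub_comm v w] at this
    linarith
  have hweight := hcista_weight_bound (l2norm_nonneg _) (l2norm_nonneg _) hd
    (by nlinarith : 1 - 2 * t * δ * opNorm A ^ 2 ≤ 1 / 2) (by linarith) hα0 hα1.le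
  have hdv := Flasso_soft_gradStep_le A b hlam ht.le hv x
  have hdw := Flasso_soft_gradStep_le A b hlam ht.le hw x
  rw [sub_self, l2norm_zero] at hdv
  have hconv := mul_le_mul_of_nonneg_left
    (Flasso_convex_combination_le A b hlam hα0 hα1.le v w) ht.le
  have hwu : 0 ≤ (1 - α) * (1 - t * opNorm A ^ 2) * l2norm (w - u) ^ 2 := by
    have := sub_nonneg.2 hα1.le; have := sub_nonneg.2 htA; positivity
  have hcoef : 0 ≤ α * l2norm (v - x) ^ 2 *
      ((4 * δ * (t * opNorm A ^ 2) - 1) / 4 + (1 - t * opNorm A ^ 2) / 2) := by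
    have := sub_nonneg.2 hδt; have := sub_nonneg.2 htA; positivity
  have htail : 0 ≤ (1 - t * opNorm A ^ 2) * l2norm (v - x) ^ 2 / 22 := by
    have := sub_nonneg.2 htA; positivity
  refine le_of_mul_le_mul_left ?_ ht
  -- `hα` pays for the possible increase `(1 - α) ‖u - x‖² / 2` at `w` out of the decrease at `v`.
  linear_combination hconv + α * hdv + (1 - α) * hdw + hwu / 2 + hα / 2 + hcoef + hweight + htail

theorem norm_gradf_le_of_eq_soft {lam t : ℝ} (hlam : 0 ≤ lam) (ht : 0 ≤ t) {x v : Fin n → ℝ}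
    (hv : v = soft (lam * t) (x - t • gradf A b x)) :
    t * ‖gradf A b x‖ ≤ ‖x - v‖ + lam * t := by
  have hsoft := norm_sub_soft_le (mul_nonneg hlam ht) (x - t • gradf A b x)
  rw [← hv] at hsoft
  calc t * ‖gradf A b x‖ = ‖(x - v) - (x - t • gradf A b x - v)‖ := by
        rw [sub_sub_sub_cancel_right, sub_sub_cancel, norm_smul, Real.norm_of_nonneg ht]
    _ ≤ ‖x - v‖ + lam * t := (norm_sub_le _ _).trans (by gcongr)

end Step

theorem tendsto_zero_of_succ_add_le {G V : ℕ → ℝ} (hG : BddBelow (Set.range G))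
    (hV : ∀ k, 0 ≤ V k) (h : ∀ k, G (k + 1) + V k ≤ G k) : Tendsto V atTop (𝓝 0) := by
  have hanti : Antitone G := antitone_nat_of_succ_le fun k => by linarith [h k, hV k]
  have hlim := tendsto_atTop_ciInf hanti hG
  have hdiff : Tendsto (fun k => G k - G (k + 1)) atTop (𝓝 0) := by
    simpa using hlim.sub (hlim.comp (tendsto_add_atTop_nat 1))
  exact squeeze_zero hV (fun k => by linarith [h k]) hdiff

/-- Eq. (5) of the paper with the parameter constraints (7)–(9). -/
structure IsHCISTATrajectory {m n : ℕ} (A : Matrix (Fin m) (Fin n) ℝ) (b : Fin m → ℝ)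
    (x v u w : ℕ → Fin n → ℝ) (δ t lam α : ℕ → ℝ) (Clam : ℝ) : Prop where
  δ_mem : ∀ k, 1 / 4 < δ k ∧ δ k < 1 / 2
  t_mem : ∀ k, 1 / (4 * δ k * opNorm A ^ 2) ≤ t k ∧ t k ≤ 1 / opNorm A ^ 2
  lam_pos : ∀ k, 0 < lam k
  v_eq : ∀ k, v k = soft (lam k * t k) (x k - t k • gradf A b (x k))
  w_eq : ∀ k, w k = soft (lam k * t k) (u k - t k • gradf A b (u k))
  x_succ : ∀ k, x (k + 1) = α k • v k + (1 - α k) • w k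
  α_eq_one : ∀ k, v k = x k → α k = 1
  α_mem : ∀ k, v k ≠ x k →
    l2norm (u k - x k) ^ 2 /
      (l2norm (u k - x k) ^ 2 + (1 - 2 * t k * δ k * opNorm A ^ 2) * l2norm (v k - x k) ^ 2)
        ≤ α k ∧ α k < 1
  lam_succ_le : ∀ k, lam (k + 1) ≤ min (lam k) (Clam * l2norm (x (k + 1) - x k))

namespace IsHCISTATrajectory

variable {m n : ℕ} {A : Matrix (Fin m) (Fin n) ℝ} {b : Fin m → ℝ} {x v u w : ℕ → Fin n → ℝ}
  {δ t lam α : ℕ → ℝ} {Clam : ℝ} (h : IsHCISTATrajectory A b x v u w δ t lam α Clam)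
include h

theorem t_pos (hA : A ≠ 0) (k : ℕ) : 0 < t k := by
  have := opNorm_pos A hA
  have := (h.δ_mem k).1
  exact lt_of_lt_of_le (by positivity) (h.t_mem k).1

theorem t_mul_opNorm_sq_le (hA : A ≠ 0) (k : ℕ) : t k * opNorm A ^ 2 ≤ 1 := by
  have := opNorm_pos A hA
  exact (le_div_iff₀ (by positivity)).1 (h.t_mem k).2

theorem one_le_four_mul_δ_mul (hA : A ≠ 0) (k : ℕ) : 1 ≤ 4 * δ k * (t k * opNorm A ^ 2) := by
  have := opNorm_pos A hA
  have := (h.δ_mem k).1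
  have := (div_le_iff₀ (by positivity)).1 (h.t_mem k).1
  linarith

theorem one_sub_two_mul_t_mul_δ_pos (hA : A ≠ 0) (k : ℕ) :
    0 < 1 - 2 * t k * δ k * opNorm A ^ 2 := by
  have hδ := h.δ_mem k
  nlinarith [mul_le_mul_of_nonneg_left (h.t_mul_opNorm_sq_le hA k) (by linarith : 0 ≤ δ k)]

theorem v_ne_x (k : ℕ) : v k ≠ x k := by
  intro hvx
  have hstall : x (k + 1) = x k := by rw [h.x_succ k, h.α_eq_one k hvx, hvx]; simp
  have := (h.lam_succ_le k).trans (min_le_right _ _)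
  rw [hstall, sub_self, l2norm_zero, mul_zero] at this
  exact (h.lam_pos (k + 1)).not_ge this

theorem α_nonneg (hA : A ≠ 0) (k : ℕ) : 0 ≤ α k := by
  have := h.one_sub_two_mul_t_mul_δ_pos hA k
  have := l2norm_sub_pos (h.v_ne_x k)
  exact (div_nonneg (sq_nonneg _) (by positivity)).trans (h.α_mem k (h.v_ne_x k)).1

theorem l2norm_x_succ_sub_le (hA : A ≠ 0) (k : ℕ) :
    l2norm (x (k + 1) - x k) ≤ l2norm (v k - x k) + l2norm (u k - x k) := by
  have hα := h.α_nonneg hA k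
  have hα1 := (h.α_mem k (h.v_ne_x k)).2
  have hwv := l2norm_soft_gradStep_sub_le A b (h.lam_pos k).le (h.t_pos hA k).le
    (h.t_mul_opNorm_sq_le hA k) (h.v_eq k) (h.w_eq k)
  have hsplit : x (k + 1) - x k = (v k - x k) + (1 - α k) • (w k - v k) := by
    rw [h.x_succ k]; module
  rw [hsplit]
  refine (l2norm_add_le _ _).trans ?_
  rw [l2norm_smul, abs_of_pos (by linarith)]
  nlinarith [l2norm_nonneg (w k - v k)]

theorem Flasso_succ_add_le (hA : A ≠ 0) (k : ℕ) :
    Flasso A b (lam (k + 1)) (x (k + 1)) + opNorm A ^ 2 / 22 * l2norm (v k - x k) ^ 2 ≤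
      Flasso A b (lam k) (x k) := by
  have hstep := Flasso_hcista_step_le A b (h.lam_pos k).le (h.t_pos hA k)
    (h.t_mul_opNorm_sq_le hA k) (h.one_le_four_mul_δ_mul hA k)
    (h.one_sub_two_mul_t_mul_δ_pos hA k) (h.v_eq k) (h.w_eq k) (h.v_ne_x k)
    (h.α_mem k (h.v_ne_x k)).1 (h.α_mem k (h.v_ne_x k)).2
  rw [← h.x_succ k] at hstep
  have := Flasso_le_Flasso_of_le A b ((h.lam_succ_le k).trans (min_le_left _ _)) (x (k + 1))
  linarith

theorem tendsto_l2norm_v_sub_x (hA : A ≠ 0) :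
    Tendsto (fun k => l2norm (v k - x k)) atTop (𝓝 0) := by
  have hL := opNorm_pos A hA
  have hsq := tendsto_zero_of_succ_add_le
    (V := fun k => opNorm A ^ 2 / 22 * l2norm (v k - x k) ^ 2)
    ⟨0, by rintro _ ⟨k, rfl⟩; exact Flasso_nonneg A b (h.lam_pos k).le (x k)⟩
    (fun k => by positivity) (h.Flasso_succ_add_le hA)
  have := (hsq.const_mul (opNorm A ^ 2 / 22)⁻¹).sqrt
  simpa [← mul_assoc, hL.ne', Real.sqrt_sq (l2norm_nonneg _)] using this

theorem tendsto_lam (hA : A ≠ 0) {η : ℝ}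
    (hη : ∀ k, v k ≠ x k → l2norm (u k - x k) ≤ η * l2norm (v k - x k)) :
    Tendsto lam atTop (𝓝 0) := by
  have hv := h.tendsto_l2norm_v_sub_x hA
  have hstep : Tendsto (fun k => l2norm (x (k + 1) - x k)) atTop (𝓝 0) := by
    refine squeeze_zero (fun k => l2norm_nonneg _) (fun k => ?_)
      (by simpa using hv.const_mul (1 + η))
    have := h.l2norm_x_succ_sub_le hA k
    have := hη k (h.v_ne_x k)
    linarith
  refine (tendsto_add_atTop_iff_nat 1).1 <| squeeze_zero (fun k => (h.lam_pos (k + 1)).le)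
    (fun k => (h.lam_succ_le k).trans (min_le_right _ _)) ?_
  simpa using hstep.const_mul Clam

theorem norm_gradf_le (hA : A ≠ 0) (k : ℕ) :
    ‖gradf A b (x k)‖ ≤ 2 * opNorm A ^ 2 * l2norm (v k - x k) + lam k := by
  have ht := h.t_pos hA k
  have hgrad := norm_gradf_le_of_eq_soft A b (h.lam_pos k).le ht.le (h.v_eq k)
  have hsup : ‖x k - v k‖ ≤ l2norm (v k - x k) := l2norm_sub_comm (x k) (v k) ▸ norm_le_l2norm _
  have h2t : 1 ≤ 2 * (t k * opNorm A ^ 2) := by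
    have hτ : 0 ≤ t k * opNorm A ^ 2 := by positivity
    nlinarith [h.one_le_four_mul_δ_mul hA k, mul_le_mul_of_nonneg_right (h.δ_mem k).2.le hτ]
  refine le_of_mul_le_mul_left ?_ ht
  nlinarith [l2norm_nonneg (v k - x k)]

theorem tendsto_gradf (hA : A ≠ 0) {η : ℝ}
    (hη : ∀ k, v k ≠ x k → l2norm (u k - x k) ≤ η * l2norm (v k - x k)) :
    Tendsto (fun k => gradf A b (x k)) atTop (𝓝 0) := by
  refine squeeze_zero_norm (h.norm_gradf_le hA) ?_
  simpa using
    ((h.tendsto_l2norm_v_sub_x hA).const_mul (2 * opNorm A ^ 2)).add (h.tendsto_lam hA hη)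

end IsHCISTATrajectory

theorem hcista_theorem2_general {M N : ℕ}
    (A : Matrix (Fin M) (Fin N) ℝ) (hA : A ≠ 0) (b : Fin M → ℝ)
    (x v u w : ℕ → Fin N → ℝ) (δ t lam α : ℕ → ℝ) (Clam : ℝ)
    (hδ : ∀ n, 1 / 4 < δ n ∧ δ n < 1 / 2)
    (ht : ∀ n, 1 / (4 * δ n * (opNorm A) ^ 2) ≤ t n ∧ t n ≤ 1 / (opNorm A) ^ 2)
    (hlam : ∀ n, 0 < lam n)
    (hv : ∀ n, v n = soft (lam n * t n) (x n - t n • gradf A b (x n)))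
    (hw : ∀ n, w n = soft (lam n * t n) (u n - t n • gradf A b (u n)))
    (hxs : ∀ n, x (n + 1) = α n • v n + (1 - α n) • w n)
    (hα1 : ∀ n, v n = x n → α n = 1)
    (hα2 : ∀ n, v n ≠ x n →
      (l2norm (u n - x n)) ^ 2 /
        ((l2norm (u n - x n)) ^ 2
          + (1 - 2 * t n * δ n * (opNorm A) ^ 2) * (l2norm (v n - x n)) ^ 2) ≤ α n
        ∧ α n < 1)
    (hlam' : ∀ n, lam (n + 1) ≤ min (lam n) (Clam * l2norm (x (n + 1) - x n)))
    (hAssumption1 : ∃ ηc : ℝ, 0 < ηc ∧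
      ∀ n, v n ≠ x n → l2norm (u n - x n) ≤ ηc * l2norm (v n - x n)) :
    ∀ xbar : Fin N → ℝ,
      (∃ φ : ℕ → ℕ, StrictMono φ ∧
        Filter.Tendsto (fun k => x (φ k)) Filter.atTop (nhds xbar)) →
      A.transpose.mulVec (A.mulVec xbar - b) = 0 ∧
      ∀ y : Fin N → ℝ,
        (1 / 2) * (l2norm (A.mulVec xbar - b)) ^ 2 ≤ (1 / 2) * (l2norm (A.mulVec y - b)) ^ 2 := by
  intro xbar ⟨φ, hφ, hx⟩
  obtain ⟨η, -, hη⟩ := hAssumption1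
  have hT : IsHCISTATrajectory A b x v u w δ t lam α Clam :=
    ⟨hδ, ht, hlam, hv, hw, hxs, hα1, hα2, hlam'⟩
  have hgrad : gradf A b xbar = 0 :=
    tendsto_nhds_unique ((continuous_gradf A b).tendsto xbar |>.comp hx)
      ((hT.tendsto_gradf hA hη).comp hφ.tendsto_atTop)
  exact ⟨hgrad, fun y =>
    mul_le_mul_of_nonneg_left (l2norm_sq_le_of_gradf_eq_zero A b hgrad y) (by norm_num)⟩

/-- Theorem 2: convergence of HCISTA, precise stationarity form. Every accumulation point
of the iterates is a stationary point of `f(x) = (1/2)‖Ax-b‖₂²`, i.e. `Aᵀ(Ax̄-b) = 0`;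
equivalently, a global minimizer of that function. -/
theorem hcista_theorem2 {M N : ℕ} (hM : 0 < M) (hN : 0 < N)
    (A : Matrix (Fin M) (Fin N) ℝ) (hA : A ≠ 0) (b : Fin M → ℝ)
    (x v u w : ℕ → Fin N → ℝ) (δ t lam α : ℕ → ℝ) (Clam : ℝ) (hClam : 0 < Clam)
    (hδ : ∀ n, 1 / 4 < δ n ∧ δ n < 1 / 2)
    (ht : ∀ n, 1 / (4 * δ n * (opNorm A) ^ 2) ≤ t n ∧ t n ≤ 1 / (opNorm A) ^ 2)
    (hlam : ∀ n, 0 < lam n)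
    (hv : ∀ n, v n = soft (lam n * t n) (x n - t n • gradf A b (x n)))
    (hw : ∀ n, w n = soft (lam n * t n) (u n - t n • gradf A b (u n)))
    (hxs : ∀ n, x (n + 1) = α n • v n + (1 - α n) • w n)
    (hα1 : ∀ n, v n = x n → α n = 1)
    (hα2 : ∀ n, v n ≠ x n →
      (l2norm (u n - x n)) ^ 2 /
        ((l2norm (u n - x n)) ^ 2
          + (1 - 2 * t n * δ n * (opNorm A) ^ 2) * (l2norm (v n - x n)) ^ 2) ≤ α n
        ∧ α n < 1)
    (hlam' : ∀ n, lam (n + 1) ≤ min (lam n) (Clam * l2norm (x (n + 1) - x n)))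
    (hAssumption1 : ∃ ηc : ℝ, 0 < ηc ∧
      ∀ n, v n ≠ x n → l2norm (u n - x n) ≤ ηc * l2norm (v n - x n)) :
    ∀ xbar : Fin N → ℝ,
      (∃ φ : ℕ → ℕ, StrictMono φ ∧
        Filter.Tendsto (fun k => x (φ k)) Filter.atTop (nhds xbar)) →
      A.transpose.mulVec (A.mulVec xbar - b) = 0 ∧
      ∀ y : Fin N → ℝ,
        (1 / 2) * (l2norm (A.mulVec xbar - b)) ^ 2 ≤ (1 / 2) * (l2norm (A.mulVec y - b)) ^ 2 :=
  hcista_theorem2_general A hA b x v u w δ t lam α Clam hδ ht hlam hv hw hxs hα1 hα2 hlam'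
    hAssumption1
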